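/- arXiv:2001.04400 — 5 statements merged into one kernel-verified Lean document; each statement's English description precedes it below -/
import Mathlib

section
/- For the statistical model of sequential measurements, the modified Shannon entropy satisfies H(p) ≤ -Σ_{j∈J} q(j)·log(p̃(j)/d̃(j)). -/
/-!
After cancelling `d` and `d̃`, the claim is Gibbs' inequality for the weights `Π(j|i) x(i)`:
termwise `x (log x̃ - log x) ≤ x̃ - x` (from `log t ≤ t - 1`), and summing against `Π(j|i)`
the right-hand side becomes `Σ P̃ - Σ P = 0`.
-/

open Finset Real

theorem mul_log_mul_div_cancel_left (d x : ℝ) : d * x * log (d * x / d) = d * x * log x := by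
  rcases eq_or_ne d 0 with rfl | hd
  · simp
  · rw [mul_div_cancel_left₀ x hd]

/-- If `∑ f = 0` the division is junk, but then `f ≥ 0` vanishes on `s` and so does the
left factor. -/
theorem sum_mul_mul_log_sum_mul_div_cancel_left {ι : Type*} {s : Finset ι} {f : ι → ℝ}
    (hf : ∀ i ∈ s, 0 ≤ f i) (g : ι → ℝ) (y : ℝ) :
    (∑ i ∈ s, f i * g i) * log ((∑ i ∈ s, f i) * y / ∑ i ∈ s, f i) =
      (∑ i ∈ s, f i * g i) * log y := by
  by_cases h : ∑ i ∈ s, f i = 0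
  · rw [sum_eq_zero_iff_of_nonneg hf] at h
    rw [sum_eq_zero fun i hi => by rw [h i hi, zero_mul], zero_mul, zero_mul]
  · rw [mul_div_cancel_left₀ y h]

theorem mul_log_sub_log_le {a b : ℝ} (ha : 0 ≤ a) (hb : 0 < b) :
    a * (log b - log a) ≤ b - a := by
  rcases ha.eq_or_lt with rfl | ha
  · simpa using hb.le
  · calc a * (log b - log a) = a * log (b / a) := by rw [log_div hb.ne' ha.ne']
      _ ≤ a * (b / a - 1) :=
        mul_le_mul_of_nonneg_left (log_le_sub_one_of_pos (by positivity)) ha.le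
      _ = b - a := by field_simp

theorem sum_sum_mul_log_sub_le {I J : Type*} [Fintype I] [Fintype J] {K : J → I → ℝ}
    {x : I → ℝ} {y : J → ℝ} (hK : ∀ j i, 0 ≤ K j i) (hx : ∀ i, 0 ≤ x i)
    (hy : ∀ j, 0 < y j) :
    ∑ i, ∑ j, K j i * (x i * log (y j)) - ∑ i, ∑ j, K j i * (x i * log (x i)) ≤
      ∑ i, ∑ j, K j i * y j - ∑ i, ∑ j, K j i * x i := by
  simp only [← sum_sub_distrib, ← mul_sub]
  gcongr with i _ j _
  · exact hK j i
  · exact mul_log_sub_log_le (hx i) (hy j)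

theorem modified_entropy_bound_general {I J : Type*} [Fintype I] [Fintype J]
    (K : J → I → ℝ) (x : I → ℝ) (xt : J → ℝ)
    (hK : ∀ j i, 0 ≤ K j i) (hx : ∀ i, 0 ≤ x i) (hxt : ∀ j, 0 < xt j)
    (hP : ∑ i, ∑ j, K j i * x i = 1)
    (hPt : ∑ i, ∑ j, K j i * xt j = 1) :
    -∑ i, ((∑ j, K j i) * x i) * Real.log (((∑ j, K j i) * x i) / (∑ j, K j i)) ≤
      -∑ j, (∑ i, K j i * x i) *
        Real.log (((∑ i, K j i) * xt j) / (∑ i, K j i)) := by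
  simp only [mul_log_mul_div_cancel_left,
    sum_mul_mul_log_sum_mul_div_cancel_left (fun i _ => hK _ i), neg_le_neg_iff]
  have hgibbs := sum_sum_mul_log_sub_le hK hx hxt
  rw [hP, hPt, sub_self, sub_nonpos] at hgibbs
  have hcross :
      ∑ j, (∑ i, K j i * x i) * log (xt j) = ∑ i, ∑ j, K j i * (x i * log (xt j)) := by
    simp only [sum_mul, mul_assoc]
    exact sum_comm
  have hentropy :
      ∑ i, (∑ j, K j i) * x i * log (x i) = ∑ i, ∑ j, K j i * (x i * log (x i)) := by
    simp only [sum_mul, mul_assoc]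
  rwa [hcross, hentropy]

/-- For the statistical model of sequential measurements, the modified Shannon entropy
`H(p) = -Σ_i p(i) log(p(i)/d(i))` (with `p(i) = d(i)·x(i)`) satisfies
`H(p) ≤ -Σ_j q(j)·log(p̃(j)/d̃(j))`, where `q(j) = Σ_i Π(j|i)·x(i)` and
`p̃(j) = d̃(j)·x̃(j)`. -/
theorem modified_entropy_bound {I J : Type*} [Fintype I] [Fintype J]
    (K : J → I → ℝ) (x : I → ℝ) (xt : J → ℝ)
    (hK : ∀ j i, 0 ≤ K j i) (hx : ∀ i, 0 ≤ x i) (hxt : ∀ j, 0 < xt j)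
    (hd : ∀ i, 0 < ∑ j, K j i) (hdt : ∀ j, 0 < ∑ i, K j i)
    (hP : ∑ i, ∑ j, K j i * x i = 1)
    (hPt : ∑ i, ∑ j, K j i * xt j = 1) :
    -∑ i, ((∑ j, K j i) * x i) * Real.log (((∑ j, K j i) * x i) / (∑ j, K j i)) ≤
      -∑ j, (∑ i, K j i * x i) *
        Real.log (((∑ i, K j i) * xt j) / (∑ i, K j i)) :=
  modified_entropy_bound_general K x xt hK hx hxt hP hPt
end

section
/- In the minimal case, where x̃(j) = q(j)/d̃(j) for all j, the modified Shannon entropy does not decrease: H(p) ≤ H(q). -/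
open Finset Real

/-- The log-sum inequality, in weighted form. -/
theorem sum_mul_log_sum_div_sum_le {ι : Type*} (s : Finset ι) (w x : ι → ℝ)
    (hw : ∀ i ∈ s, 0 ≤ w i) (hx : ∀ i ∈ s, 0 ≤ x i) :
    (∑ i ∈ s, w i * x i) * log ((∑ i ∈ s, w i * x i) / ∑ i ∈ s, w i) ≤
      ∑ i ∈ s, w i * x i * log (x i) := by
  set A := ∑ i ∈ s, w i * x i
  set W := ∑ i ∈ s, w i
  rcases (sum_nonneg hw).eq_or_lt with hW | hW
  · have hw0 : ∀ i ∈ s, w i = 0 := (sum_eq_zero_iff_of_nonneg hw).mp hW.symm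
    have hA : A = 0 := sum_eq_zero fun i hi => by rw [hw0 i hi, zero_mul]
    have hR : ∑ i ∈ s, w i * x i * log (x i) = 0 :=
      sum_eq_zero fun i hi => by rw [hw0 i hi, zero_mul, zero_mul]
    rw [hA, hR, zero_mul]
  · have jensen := convexOn_mul_log.map_centerMass_le hw hW hx
    simp only [centerMass, Function.comp_apply, smul_eq_mul] at jensen
    calc A * log (A / W) = W * (W⁻¹ * A * log (W⁻¹ * A)) := by
          rw [inv_mul_eq_div, ← mul_assoc, mul_div_cancel₀ _ hW.ne']
      _ ≤ W * (W⁻¹ * ∑ i ∈ s, w i * (x i * log (x i))) := by gcongr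
      _ = ∑ i ∈ s, w i * x i * log (x i) := by
          simp only [mul_assoc]
          exact mul_inv_cancel_left₀ hW.ne' _

theorem minimal_case_entropy_increase_general {I J : Type*} [Fintype I] [Fintype J]
    (K : J → I → ℝ) (x : I → ℝ)
    (hK : ∀ j i, 0 ≤ K j i) (hx : ∀ i, 0 ≤ x i) :
    -∑ i, ((∑ j, K j i) * x i) * Real.log (((∑ j, K j i) * x i) / (∑ j, K j i)) ≤
      -∑ j, (∑ i, K j i * x i) * Real.log ((∑ i, K j i * x i) / (∑ i, K j i)) := by
  have hp : ∑ i, ((∑ j, K j i) * x i) * Real.log (((∑ j, K j i) * x i) / (∑ j, K j i)) =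
      ∑ j, ∑ i, K j i * x i * Real.log (x i) := by
    rw [sum_comm]
    refine sum_congr rfl fun i _ => ?_
    rw [mul_log_mul_div_cancel_left, sum_mul, sum_mul]
  rw [hp, neg_le_neg_iff]
  exact sum_le_sum fun j _ =>
    sum_mul_log_sum_div_sum_le univ (K j) x (fun i _ => hK j i) (fun i _ => hx i)

/-- In the minimal case `x̃(j) = q(j)/d̃(j)`, the modified Shannon entropy does not
decrease: `H(p) ≤ H(q)`, where `p(i) = d(i)·x(i)`, `q(j) = Σ_i Π(j|i)·x(i)`,
`d(i) = Σ_j Π(j|i)` and `d̃(j) = Σ_i Π(j|i)`. -/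
theorem minimal_case_entropy_increase {I J : Type*} [Fintype I] [Fintype J]
    (K : J → I → ℝ) (x : I → ℝ)
    (hK : ∀ j i, 0 ≤ K j i) (hx : ∀ i, 0 ≤ x i)
    (hd : ∀ i, 0 < ∑ j, K j i) (hdt : ∀ j, 0 < ∑ i, K j i)
    (hP : ∑ i, ∑ j, K j i * x i = 1) :
    -∑ i, ((∑ j, K j i) * x i) * Real.log (((∑ j, K j i) * x i) / (∑ j, K j i)) ≤
      -∑ j, (∑ i, K j i * x i) * Real.log ((∑ i, K j i * x i) / (∑ i, K j i)) :=
  minimal_case_entropy_increase_general K x hK hx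
end

section
/- If (ρ, σ) is minimal in the sense that Tr(σ Q_j) = Tr(ρ Q_j) for all spectral eigenprojections Q_j of σ, then S(ρ) ≤ S(σ). -/
/-!
Minimality says that `ρ` and `σ` put the same weight `Tr(ρ Q_j) = Tr(σ Q_j)` on every eigenspace
of `σ`. As `log σ = ∑ j, log s_j • Q_j`, this gives `Tr(σ log σ) = Tr(ρ log σ)`, and also
`Tr σ = Tr ρ` because `∑ j, Q_j` is the support projection of `σ`, which contains the support of
`ρ`. Hence `S(σ) - S(ρ) = Tr(ρ log ρ) - Tr(ρ log σ)`, which is nonnegative by Klein's inequality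
`Tr(ρ log σ) ≤ Tr(ρ log ρ) + Tr σ - Tr ρ`. In an eigenbasis `(u_i)` of `ρ` with eigenvalues `p_i`,
and with `q_ij = ⟪u_i, Q_j u_i⟫`, Klein's inequality is the scalar bound
`p log s ≤ p log p + s - p` summed with the weights `q_ij`; the support condition says
`∑ j, q_ij = 1` whenever `p_i ≠ 0`.
-/

open Matrix
open scoped ComplexOrder

/-- Matrix logarithm via the spectral decomposition, with `log 0 = 0` on the kernel. -/
noncomputable def mlog {n : Type*} [Fintype n] [DecidableEq n] (A : Matrix n n ℂ) :
    Matrix n n ℂ := by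
  classical
  exact
    if hA : A.IsHermitian then
      (hA.eigenvectorUnitary : Matrix n n ℂ) *
        Matrix.diagonal (fun i => (Real.log (hA.eigenvalues i) : ℂ)) *
        (star (hA.eigenvectorUnitary : Matrix n n ℂ))
    else 0

/-- Von Neumann entropy `S(τ) = -Tr(τ log τ)`. -/
noncomputable def vnEntropy {n : Type*} [Fintype n] [DecidableEq n]
    (A : Matrix n n ℂ) : ℝ := -(A * mlog A).trace.re

lemma Real.mul_log_le_mul_log_add_sub {p s : ℝ} (hp : 0 ≤ p) (hs : 0 < s) :
    p * Real.log s ≤ p * Real.log p + s - p := by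
  rcases hp.eq_or_lt with rfl | hp
  · simpa using hs.le
  have hlog := Real.log_le_sub_one_of_pos (div_pos hs hp)
  rw [Real.log_div hs.ne' hp.ne'] at hlog
  calc p * Real.log s = p * Real.log p + p * (Real.log s - Real.log p) := by ring
    _ ≤ p * Real.log p + p * (s / p - 1) := by gcongr
    _ = p * Real.log p + s - p := by field_simp; ring

lemma Real.sum_log_mul_sum_le {ι J : Type*} [Fintype ι] [Fintype J] {p : ι → ℝ} {q : ι → J → ℝ}
    {s : J → ℝ} (hp : ∀ i, 0 ≤ p i) (hq : ∀ i j, 0 ≤ q i j) (hs : ∀ j, 0 < s j)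
    (hrow : ∀ i, p i * ∑ j, q i j = p i) :
    ∑ j, Real.log (s j) * ∑ i, p i * q i j ≤
      ∑ i, p i * Real.log (p i) + ∑ j, s j * ∑ i, q i j - ∑ i, p i := by
  calc ∑ j, Real.log (s j) * ∑ i, p i * q i j
      = ∑ i, ∑ j, q i j * (p i * Real.log (s j)) := by
        simp_rw [Finset.mul_sum]
        rw [Finset.sum_comm]
        exact Finset.sum_congr rfl fun i _ => Finset.sum_congr rfl fun j _ => by ring
    _ ≤ ∑ i, ∑ j, q i j * (p i * Real.log (p i) + s j - p i) := by
        gcongr with i _ j _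
        · exact hq i j
        · exact Real.mul_log_le_mul_log_add_sub (hp i) (hs j)
    _ = ∑ i, (Real.log (p i) - 1) * (p i * ∑ j, q i j) + ∑ j, s j * ∑ i, q i j := by
        simp_rw [Finset.mul_sum]
        rw [Finset.sum_comm (f := fun j i => s j * q i j), ← Finset.sum_add_distrib]
        refine Finset.sum_congr rfl fun i _ => ?_
        rw [← Finset.sum_add_distrib]
        exact Finset.sum_congr rfl fun j _ => by ring
    _ = _ := by
        simp_rw [hrow, sub_mul, one_mul, Finset.sum_sub_distrib, mul_comm (Real.log _)]
        ring

section OrthogonalFamily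

variable {R 𝕜 J : Type*} [Semiring R] [Semiring 𝕜] [Module 𝕜 R] [Fintype J] {Q : J → R}

lemma sum_smul_mul_of_orthogonal [IsScalarTower 𝕜 R R] (hQ : ∀ j, IsIdempotentElem (Q j))
    (hQo : Pairwise fun j j' => Q j * Q j' = 0) (c : J → 𝕜) (k : J) :
    (∑ j, c j • Q j) * Q k = c k • Q k := by
  rw [Finset.sum_mul, Finset.sum_eq_single k
    (fun j _ hjk => by rw [smul_mul_assoc, hQo hjk, smul_zero]) (by simp), smul_mul_assoc,
    (hQ k).eq]

lemma mul_sum_smul_of_orthogonal [SMulCommClass 𝕜 R R] (hQ : ∀ j, IsIdempotentElem (Q j))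
    (hQo : Pairwise fun j j' => Q j * Q j' = 0) (c : J → 𝕜) (k : J) :
    Q k * ∑ j, c j • Q j = c k • Q k := by
  rw [Finset.mul_sum, Finset.sum_eq_single k
    (fun j _ hjk => by rw [mul_smul_comm, hQo hjk.symm, smul_zero]) (by simp), mul_smul_comm,
    (hQ k).eq]

end OrthogonalFamily

lemma Matrix.mul_eq_zero_of_forall_mulVec_eq_zero {n m R : Type*} [CommSemiring R] [Fintype n]
    [Fintype m] [DecidableEq m] {A B : Matrix n n R} {M : Matrix n m R}
    (hAB : ∀ v, A *ᵥ v = 0 → B *ᵥ v = 0) (hM : A * M = 0) : B * M = 0 :=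
  ext_of_mulVec_single fun k => by
    rw [← mulVec_mulVec, hAB _ (by rw [mulVec_mulVec, hM, zero_mulVec]), zero_mulVec]

namespace Matrix.IsHermitian

open Unitary

variable {n : Type*} [Fintype n] [DecidableEq n] {A : Matrix n n ℂ} (hA : A.IsHermitian)

lemma mlog_eq :
    mlog A = conjStarAlgAut ℂ _ hA.eigenvectorUnitary
      (diagonal fun i => (Real.log (hA.eigenvalues i) : ℂ)) := by
  rw [mlog, dif_pos hA, conjStarAlgAut_apply]

include hA in
lemma mlog_eq_of_forall_mulVec {L : Matrix n n ℂ}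
    (hL : ∀ (μ : ℝ) (v : n → ℂ), A *ᵥ v = (μ : ℂ) • v → L *ᵥ v = (Real.log μ : ℂ) • v) :
    mlog A = L := by
  set U : Matrix n n ℂ := (hA.eigenvectorUnitary : Matrix n n ℂ)
  set D : Matrix n n ℂ := diagonal fun i => (Real.log (hA.eigenvalues i) : ℂ)
  have hLU : L * U = U * D := ext_of_mulVec_single fun j => by
    have hv := hA.mulVec_eigenvectorBasis j
    rw [← Complex.coe_smul] at hv
    rw [← mulVec_mulVec, ← mulVec_mulVec, hA.eigenvectorUnitary_mulVec, hL _ _ hv,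
      diagonal_mulVec_single, ← smul_eq_mul, Pi.single_smul, mulVec_smul,
      hA.eigenvectorUnitary_mulVec]
  calc mlog A = U * D * star U := by rw [hA.mlog_eq, conjStarAlgAut_apply]
    _ = L := by rw [← hLU, mul_assoc, ← coe_star, coe_mul_star_self, mul_one]

/-- `hA.eigenbasisDiag M i = ⟪u i, M u i⟫` for the eigenvectors `u i` of `A`. -/
noncomputable def eigenbasisDiag (M : Matrix n n ℂ) : n → ℂ :=
  ((conjStarAlgAut ℂ _ hA.eigenvectorUnitary).symm M).diag

lemma symm_conjStarAlgAut_eigenvectorUnitary :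
    (conjStarAlgAut ℂ _ hA.eigenvectorUnitary).symm A =
      diagonal (RCLike.ofReal ∘ hA.eigenvalues) := by
  rw [conjStarAlgAut_symm, hA.conjStarAlgAut_star_eigenvectorUnitary]

lemma eigenbasisDiag_self (i : n) : hA.eigenbasisDiag A i = hA.eigenvalues i := by
  rw [eigenbasisDiag, hA.symm_conjStarAlgAut_eigenvectorUnitary, diag_apply, diagonal_apply_eq]
  rfl

lemma eigenbasisDiag_mul_left (M : Matrix n n ℂ) (i : n) :
    hA.eigenbasisDiag (A * M) i = hA.eigenvalues i * hA.eigenbasisDiag M i := by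
  rw [eigenbasisDiag, eigenbasisDiag, map_mul, hA.symm_conjStarAlgAut_eigenvectorUnitary,
    diag_apply, diagonal_mul]
  rfl

lemma eigenbasisDiag_sum {J : Type*} [Fintype J] (M : J → Matrix n n ℂ) (i : n) :
    hA.eigenbasisDiag (∑ j, M j) i = ∑ j, hA.eigenbasisDiag (M j) i := by
  simp only [eigenbasisDiag, map_sum, diag_sum, Finset.sum_apply]

lemma eigenbasisDiag_mlog (i : n) :
    hA.eigenbasisDiag (mlog A) i = Real.log (hA.eigenvalues i) := by
  rw [eigenbasisDiag, hA.mlog_eq, StarAlgEquiv.symm_apply_apply, diag_apply, diagonal_apply_eq]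

lemma eigenbasisDiag_nonneg {M : Matrix n n ℂ} (hM : M.PosSemidef) (i : n) :
    0 ≤ hA.eigenbasisDiag M i := by
  rw [eigenbasisDiag, conjStarAlgAut_symm_apply, ← coe_star]
  exact (hM.conjTranspose_mul_mul_same _).diag_nonneg

lemma sum_eigenbasisDiag (M : Matrix n n ℂ) : ∑ i, hA.eigenbasisDiag M i = M.trace := by
  rw [eigenbasisDiag, conjStarAlgAut_symm_apply, ← trace, trace_mul_cycle, ← coe_star,
    coe_mul_star_self, one_mul]

lemma trace_mul_eq_sum (M : Matrix n n ℂ) :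
    (A * M).trace = ∑ i, (hA.eigenvalues i : ℂ) * hA.eigenbasisDiag M i := by
  simp_rw [← hA.sum_eigenbasisDiag, hA.eigenbasisDiag_mul_left]

end Matrix.IsHermitian

section SpectralDecomposition

variable {n J : Type*} [Fintype n] [DecidableEq n] [Fintype J] {Q : J → Matrix n n ℂ}
  (hQ : ∀ j, IsStarProjection (Q j)) (hQo : Pairwise fun j j' => Q j * Q j' = 0)
include hQ hQo

lemma mlog_sum_smul (s : J → ℝ) :
    mlog (∑ j, (s j : ℂ) • Q j) = ∑ j, (Real.log (s j) : ℂ) • Q j := by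
  have hA : (∑ j, (s j : ℂ) • Q j).IsHermitian := isSelfAdjoint_sum _ fun j _ =>
    IsSelfAdjoint.smul (Complex.conj_ofReal (s j)) (hQ j).isSelfAdjoint
  refine hA.mlog_eq_of_forall_mulVec fun μ v hv => ?_
  have hQv : ∀ k, (s k : ℂ) • (Q k *ᵥ v) = (μ : ℂ) • (Q k *ᵥ v) := fun k => by
    rw [← smul_mulVec, ← mul_sum_smul_of_orthogonal (fun j => (hQ j).isIdempotentElem) hQo
      (fun j => (s j : ℂ)), ← mulVec_mulVec, hv, mulVec_smul]
  -- `Q k v` can only be nonzero when `s k = μ`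
  have hlog : ∀ k, (Real.log (s k) : ℂ) • (Q k *ᵥ v) = (Real.log μ : ℂ) • (Q k *ᵥ v) :=
    fun k => by
      by_cases h0 : Q k *ᵥ v = 0
      · simp [h0]
      · rw [Complex.ofReal_injective (smul_left_injective ℂ h0 (hQv k))]
  have hsum : (μ : ℂ) • v = (μ : ℂ) • ∑ k, Q k *ᵥ v := by
    simp only [← hv, sum_mulVec, smul_mulVec, hQv, Finset.smul_sum]
  rw [sum_mulVec]
  simp only [smul_mulVec, hlog, ← Finset.smul_sum]
  rcases eq_or_ne μ 0 with rfl | hμ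
  · simp
  · rw [← smul_right_injective _ (Complex.ofReal_ne_zero.mpr hμ) hsum]

lemma trace_mul_mlog_sum_smul (s : J → ℝ) (M : Matrix n n ℂ) :
    (M * mlog (∑ j, (s j : ℂ) • Q j)).trace = ∑ j, (Real.log (s j) : ℂ) * (M * Q j).trace := by
  simp only [mlog_sum_smul hQ hQo, Finset.mul_sum, trace_sum, mul_smul_comm, trace_smul,
    smul_eq_mul]

open scoped MatrixOrder in
theorem re_trace_mul_mlog_le {ρ : Matrix n n ℂ} (hρ : ρ.PosSemidef) {s : J → ℝ}
    (hs : ∀ j, 0 < s j) (hρQ : ρ * ∑ j, Q j = ρ) :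
    (ρ * mlog (∑ j, (s j : ℂ) • Q j)).trace.re ≤
      (ρ * mlog ρ).trace.re + (∑ j, (s j : ℂ) • Q j).trace.re - ρ.trace.re := by
  have hH := hρ.isHermitian
  have hc_nonneg : ∀ i j, 0 ≤ hH.eigenbasisDiag (Q j) i := fun i j =>
    hH.eigenbasisDiag_nonneg (nonneg_iff_posSemidef.mp (hQ j).nonneg) i
  set q : n → J → ℝ := fun i j => (hH.eigenbasisDiag (Q j) i).re
  have hc : ∀ i j, hH.eigenbasisDiag (Q j) i = q i j := fun i j =>
    Complex.eq_re_of_ofReal_le (r := 0) (by rw [Complex.ofReal_zero]; exact hc_nonneg i j)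
  have hrow : ∀ i, hH.eigenvalues i * ∑ j, q i j = hH.eigenvalues i := fun i => by
    have h := hH.eigenbasisDiag_mul_left (∑ j, Q j) i
    rw [hρQ, hH.eigenbasisDiag_self, hH.eigenbasisDiag_sum] at h
    simp_rw [hc] at h
    exact_mod_cast h.symm
  have hρlogρ : (ρ * mlog ρ).trace =
      ((∑ i, hH.eigenvalues i * Real.log (hH.eigenvalues i) : ℝ) : ℂ) := by
    push_cast
    simp_rw [hH.trace_mul_eq_sum, hH.eigenbasisDiag_mlog]
  have hρlogσ : (ρ * mlog (∑ j, (s j : ℂ) • Q j)).trace =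
      ((∑ j, Real.log (s j) * ∑ i, hH.eigenvalues i * q i j : ℝ) : ℂ) := by
    rw [trace_mul_mlog_sum_smul hQ hQo]
    push_cast
    simp_rw [hH.trace_mul_eq_sum, hc]
  have hσ : (∑ j, (s j : ℂ) • Q j).trace = ((∑ j, s j * ∑ i, q i j : ℝ) : ℂ) := by
    rw [trace_sum]
    push_cast
    simp_rw [trace_smul, ← hH.sum_eigenbasisDiag, hc, smul_eq_mul]
  have hρtr : ρ.trace = ((∑ i, hH.eigenvalues i : ℝ) : ℂ) := by
    rw [hH.trace_eq_sum_eigenvalues, Complex.ofReal_sum]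
    rfl
  simp only [hρlogρ, hρlogσ, hσ, hρtr, Complex.ofReal_re]
  exact Real.sum_log_mul_sum_le hρ.eigenvalues_nonneg
    (fun i j => (Complex.nonneg_iff.mp (hc_nonneg i j)).1) hs hrow

end SpectralDecomposition

theorem minimal_pair_entropy_le_general {d : ℕ} {J : Type*} [Fintype J]
    (ρ σ : Matrix (Fin d) (Fin d) ℂ)
    (hρ : ρ.PosSemidef)
    (s : J → ℝ) (Q : J → Matrix (Fin d) (Fin d) ℂ)
    (hspos : ∀ j, 0 < s j)
    (hQh : ∀ j, (Q j).IsHermitian) (hQp : ∀ j, Q j * Q j = Q j)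
    (hQo : ∀ j j', j ≠ j' → Q j * Q j' = 0)
    (hσdec : σ = ∑ j, (s j : ℂ) • Q j)
    (hsupp : ∀ v : Fin d → ℂ, σ.mulVec v = 0 → ρ.mulVec v = 0)
    (hmin : ∀ j, (σ * Q j).trace = (ρ * Q j).trace) :
    vnEntropy ρ ≤ vnEntropy σ := by
  have hQ : ∀ j, IsStarProjection (Q j) := fun j => ⟨hQp j, hQh j⟩
  have hσP : σ * ∑ j, Q j = σ := by
    rw [Finset.mul_sum, hσdec]
    exact Finset.sum_congr rfl fun j _ =>
      sum_smul_mul_of_orthogonal (fun j => (hQ j).isIdempotentElem) hQo _ j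
  have hρP : ρ * ∑ j, Q j = ρ := by
    have h := mul_eq_zero_of_forall_mulVec_eq_zero hsupp (M := 1 - ∑ j, Q j)
      (by rw [mul_sub, mul_one, hσP, sub_self])
    rwa [mul_sub, mul_one, sub_eq_zero, eq_comm] at h
  have htrace : σ.trace = ρ.trace :=
    calc σ.trace = (σ * ∑ j, Q j).trace := by rw [hσP]
      _ = (ρ * ∑ j, Q j).trace := by simp only [Finset.mul_sum, trace_sum, hmin]
      _ = ρ.trace := by rw [hρP]
  have hcross : (σ * mlog σ).trace = (ρ * mlog σ).trace := by
    rw [hσdec, trace_mul_mlog_sum_smul hQ hQo, trace_mul_mlog_sum_smul hQ hQo, ← hσdec]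
    simp only [hmin]
  have hklein := re_trace_mul_mlog_le hQ hQo hρ hspos hρP
  rw [← hσdec, htrace] at hklein
  rw [vnEntropy, vnEntropy, hcross]
  linarith

/-- If the pair `(ρ, σ)` is minimal, i.e. `Tr(σ Q_j) = Tr(ρ Q_j)` for all spectral
eigenprojections `Q_j` of `σ` (with distinct eigenvalues `s j > 0` on the support of
`σ`), then `S(ρ) ≤ S(σ)`. -/
theorem minimal_pair_entropy_le {d : ℕ} {J : Type*} [Fintype J]
    (ρ σ : Matrix (Fin d) (Fin d) ℂ)
    (hρ : ρ.PosSemidef) (hρ1 : ρ.trace = 1)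
    (hσ : σ.PosSemidef) (hσ1 : σ.trace = 1)
    (s : J → ℝ) (Q : J → Matrix (Fin d) (Fin d) ℂ)
    (hs : Function.Injective s) (hspos : ∀ j, 0 < s j)
    (hQh : ∀ j, (Q j).IsHermitian) (hQp : ∀ j, Q j * Q j = Q j)
    (hQo : ∀ j j', j ≠ j' → Q j * Q j' = 0)
    (hσdec : σ = ∑ j, (s j : ℂ) • Q j)
    (hsupp : ∀ v : Fin d → ℂ, σ.mulVec v = 0 → ρ.mulVec v = 0)
    (hmin : ∀ j, (σ * Q j).trace = (ρ * Q j).trace) :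
    vnEntropy ρ ≤ vnEntropy σ :=
  minimal_pair_entropy_le_general ρ σ hρ s Q hspos hQh hQp hQo hσdec hsupp hmin
end

section
/- Lüders measurements increase entropy: if (P_n) is a finite family of mutually orthogonal projections summing to the identity and σ = Σ_n P_n ρ P_n, then S(ρ) ≤ S(σ). -/
/-!
Diagonalise `ρ = V diag(λ) V*` and `σ = U diag(μ) U*`. With `Bₙ = U* Pₙ V`, comparing the
diagonals of `U* σ U = Σₙ Bₙ diag(λ) Bₙ*` gives `μ = D λ` for `D_{ji} = Σₙ |(Bₙ)_{ji}|²`, and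
`Σₙ Pₙ Pₙ* = Σₙ Pₙ* Pₙ = 1` makes `D` doubly stochastic. As `η(x) = -x log x` is concave,
Jensen's inequality along each row of `D`, summed over the rows, gives
`S(ρ) = Σᵢ η(λᵢ) ≤ Σⱼ η(μⱼ) = S(σ)`.
-/

open Matrix
open scoped ComplexOrder

open Finset

namespace Matrix

variable {m n ι : Type*}

lemma mul_diagonal_mul_conjTranspose_apply_self [Fintype n] [DecidableEq n] (M : Matrix m n ℂ)
    (g : n → ℂ) (j : m) :
    (M * diagonal g * Mᴴ) j j = ∑ i, g i * Complex.normSq (M j i) := by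
  rw [mul_apply]
  refine sum_congr rfl fun i _ ↦ ?_
  rw [mul_diagonal, conjTranspose_apply, Complex.star_def, mul_comm (M j i), mul_assoc,
    Complex.mul_conj]

lemma mul_conjTranspose_self_apply_self [Fintype n] (M : Matrix m n ℂ) (j : m) :
    (M * Mᴴ) j j = ∑ i, (Complex.normSq (M j i) : ℂ) := by
  classical
  simpa using mul_diagonal_mul_conjTranspose_apply_self M 1 j

lemma conjTranspose_mul_self_apply_self [Fintype m] (M : Matrix m n ℂ) (i : n) :
    (Mᴴ * M) i i = ∑ j, (Complex.normSq (M j i) : ℂ) := by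
  simpa using mul_conjTranspose_self_apply_self Mᴴ i

def sumNormSq [Fintype ι] (B : ι → Matrix m n ℂ) : Matrix m n ℝ :=
  of fun j i ↦ ∑ k, Complex.normSq (B k j i)

lemma sumNormSq_mem_doublyStochastic [Fintype n] [DecidableEq n] [Fintype ι]
    {B : ι → Matrix n n ℂ} (h₁ : ∑ k, B k * (B k)ᴴ = 1) (h₂ : ∑ k, (B k)ᴴ * B k = 1) :
    sumNormSq B ∈ doublyStochastic ℝ n := by
  refine (mem_doublyStochastic_iff_sum).2
    ⟨fun j i ↦ sum_nonneg fun k _ ↦ Complex.normSq_nonneg _, fun j ↦ ?_, fun i ↦ ?_⟩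
  · apply Complex.ofReal_injective
    have := congr_fun₂ h₁ j j
    rw [sum_apply] at this
    simp_rw [mul_conjTranspose_self_apply_self] at this
    push_cast [sumNormSq, of_apply]
    rw [sum_comm]
    simpa using this
  · apply Complex.ofReal_injective
    have := congr_fun₂ h₂ i i
    rw [sum_apply] at this
    simp_rw [conjTranspose_mul_self_apply_self] at this
    push_cast [sumNormSq, of_apply]
    rw [sum_comm]
    simpa using this

lemma sum_conj_mul_conjTranspose_eq_one [Fintype n] [DecidableEq n] [Fintype ι]
    {K : ι → Matrix n n ℂ} (hK : ∑ k, K k * (K k)ᴴ = 1) {U V : Matrix n n ℂ}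
    (hU : U ∈ unitaryGroup n ℂ) (hV : V ∈ unitaryGroup n ℂ) :
    ∑ k, (Uᴴ * K k * V) * (Uᴴ * K k * V)ᴴ = 1 := by
  have hVV : V * Vᴴ = 1 := by rw [← star_eq_conjTranspose]; exact mem_unitaryGroup_iff.1 hV
  have hUU : Uᴴ * U = 1 := by rw [← star_eq_conjTranspose]; exact mem_unitaryGroup_iff'.1 hU
  calc ∑ k, (Uᴴ * K k * V) * (Uᴴ * K k * V)ᴴ = Uᴴ * (∑ k, K k * (K k)ᴴ) * U := by
        simp only [conjTranspose_mul, conjTranspose_conjTranspose, mul_sum, sum_mul, mul_assoc]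
        simp only [← mul_assoc V, hVV, one_mul]
    _ = 1 := by rw [hK, Matrix.mul_one, hUU]

lemma IsHermitian.eigenvalues_sum_mul_mul_conjTranspose [Fintype n] [DecidableEq n] [Fintype ι]
    {A : Matrix n n ℂ} (hA : A.IsHermitian) (K : ι → Matrix n n ℂ)
    (hσ : (∑ k, K k * A * (K k)ᴴ).IsHermitian) :
    hσ.eigenvalues = sumNormSq (fun k ↦ (hσ.eigenvectorUnitary : Matrix n n ℂ)ᴴ * K k *
      (hA.eigenvectorUnitary : Matrix n n ℂ)) *ᵥ hA.eigenvalues := by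
  set U : Matrix n n ℂ := ↑hσ.eigenvectorUnitary
  set V : Matrix n n ℂ := ↑hA.eigenvectorUnitary
  have hσU :
      Uᴴ * (∑ k, K k * A * (K k)ᴴ) * U = diagonal (RCLike.ofReal ∘ hσ.eigenvalues) := by
    have := hσ.conjStarAlgAut_star_eigenvectorUnitary
    rwa [Unitary.conjStarAlgAut_apply, Unitary.coe_star, star_star, star_eq_conjTranspose] at this
  have hAV : A = V * diagonal (RCLike.ofReal ∘ hA.eigenvalues) * Vᴴ := by
    rw [← star_eq_conjTranspose]
    exact hA.spectral_theorem
  funext j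
  apply Complex.ofReal_injective
  calc (hσ.eigenvalues j : ℂ) = (Uᴴ * (∑ k, K k * A * (K k)ᴴ) * U) j j := by
        rw [hσU, diagonal_apply_eq]; rfl
    _ = ∑ k, ((Uᴴ * K k * V) * diagonal (RCLike.ofReal ∘ hA.eigenvalues) *
          (Uᴴ * K k * V)ᴴ : Matrix n n ℂ) j j := by
        rw [mul_sum, sum_mul, sum_apply]
        simp only [hAV, conjTranspose_mul, conjTranspose_conjTranspose, mul_assoc]
    _ = _ := by
        simp only [mul_diagonal_mul_conjTranspose_apply_self, mulVec, dotProduct, sumNormSq,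
          of_apply, sum_mul, Function.comp_apply]
        push_cast
        rw [sum_comm]
        exact sum_congr rfl fun i _ ↦ sum_congr rfl fun k _ ↦ mul_comm _ _

end Matrix

lemma ConcaveOn.sum_le_sum_mulVec_of_mem_doublyStochastic {n : Type*} [Fintype n] [DecidableEq n]
    {s : Set ℝ} {f : ℝ → ℝ} (hf : ConcaveOn ℝ s f) {D : Matrix n n ℝ}
    (hD : D ∈ doublyStochastic ℝ n) {x : n → ℝ} (hx : ∀ i, x i ∈ s) :
    ∑ i, f (x i) ≤ ∑ j, f ((D *ᵥ x) j) := by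
  calc ∑ i, f (x i) = ∑ i, (∑ j, D j i) * f (x i) := by
        simp only [sum_col_of_mem_doublyStochastic hD, one_mul]
    _ = ∑ j, ∑ i, D j i • f (x i) := by
        simp only [sum_mul, smul_eq_mul]
        exact sum_comm
    _ ≤ ∑ j, f (∑ i, D j i • x i) := sum_le_sum fun j _ ↦
        hf.le_map_sum (fun i _ ↦ nonneg_of_mem_doublyStochastic hD)
          (sum_row_of_mem_doublyStochastic hD j) fun i _ ↦ hx i
    _ = ∑ j, f ((D *ᵥ x) j) := by simp only [smul_eq_mul, mulVec, dotProduct]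

lemma vnEntropy_eq_sum_negMulLog {n : Type*} [Fintype n] [DecidableEq n] {A : Matrix n n ℂ}
    (hA : A.IsHermitian) : vnEntropy A = ∑ i, Real.negMulLog (hA.eigenvalues i) := by
  set V : Matrix n n ℂ := ↑hA.eigenvectorUnitary
  have hVV : Vᴴ * V = 1 := by
    rw [← star_eq_conjTranspose]; exact mem_unitaryGroup_iff'.1 hA.eigenvectorUnitary.2
  have hAV : A = V * diagonal (RCLike.ofReal ∘ hA.eigenvalues) * Vᴴ := by
    rw [← star_eq_conjTranspose]
    exact hA.spectral_theorem
  have hlog : mlog A = V * diagonal (fun i ↦ (Real.log (hA.eigenvalues i) : ℂ)) * Vᴴ := by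
    rw [mlog, dif_pos hA, star_eq_conjTranspose]
  have hAlog : A * mlog A = V * (diagonal (RCLike.ofReal ∘ hA.eigenvalues) *
      diagonal (fun i ↦ (Real.log (hA.eigenvalues i) : ℂ))) * Vᴴ := by
    rw [hlog]
    nth_rewrite 1 [hAV]
    simp only [Matrix.mul_assoc]
    rw [← Matrix.mul_assoc Vᴴ, hVV, Matrix.one_mul]
  rw [vnEntropy, hAlog, trace_mul_cycle, hVV, Matrix.one_mul, diagonal_mul_diagonal,
    trace_diagonal, Complex.re_sum, ← sum_neg_distrib]
  simp [Real.negMulLog, ← Complex.ofReal_mul]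

theorem vnEntropy_le_vnEntropy_sum_mul_mul_conjTranspose {n ι : Type*} [Fintype n]
    [DecidableEq n] [Fintype ι] {A : Matrix n n ℂ} (hA : A.PosSemidef) {K : ι → Matrix n n ℂ}
    (hK₁ : ∑ k, K k * (K k)ᴴ = 1) (hK₂ : ∑ k, (K k)ᴴ * K k = 1) :
    vnEntropy A ≤ vnEntropy (∑ k, K k * A * (K k)ᴴ) := by
  have hσ : (∑ k, K k * A * (K k)ᴴ).IsHermitian :=
    isSelfAdjoint_sum _ fun k _ ↦ isHermitian_mul_mul_conjTranspose (K k) hA.1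
  set U : Matrix n n ℂ := ↑hσ.eigenvectorUnitary
  set V : Matrix n n ℂ := ↑hA.1.eigenvectorUnitary
  have hB₁ : ∑ k, (Uᴴ * K k * V) * (Uᴴ * K k * V)ᴴ = 1 :=
    sum_conj_mul_conjTranspose_eq_one hK₁ hσ.eigenvectorUnitary.2 hA.1.eigenvectorUnitary.2
  have hB₂ : ∑ k, (Uᴴ * K k * V)ᴴ * (Uᴴ * K k * V) = 1 := by
    calc ∑ k, (Uᴴ * K k * V)ᴴ * (Uᴴ * K k * V)
        = ∑ k, (Vᴴ * (K k)ᴴ * U) * (Vᴴ * (K k)ᴴ * U)ᴴ := by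
          simp only [conjTranspose_mul, conjTranspose_conjTranspose, Matrix.mul_assoc]
      _ = 1 := sum_conj_mul_conjTranspose_eq_one (K := fun k ↦ (K k)ᴴ)
          (by simpa only [conjTranspose_conjTranspose] using hK₂)
          hA.1.eigenvectorUnitary.2 hσ.eigenvectorUnitary.2
  rw [vnEntropy_eq_sum_negMulLog hA.1, vnEntropy_eq_sum_negMulLog hσ,
    hA.1.eigenvalues_sum_mul_mul_conjTranspose K hσ]
  exact Real.concaveOn_negMulLog.sum_le_sum_mulVec_of_mem_doublyStochastic
    (sumNormSq_mem_doublyStochastic hB₁ hB₂) fun i ↦ hA.eigenvalues_nonneg i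

theorem luders_entropy_increase_general {d : ℕ} {N : Type*} [Fintype N]
    (ρ : Matrix (Fin d) (Fin d) ℂ)
    (hρ : ρ.PosSemidef)
    (P : N → Matrix (Fin d) (Fin d) ℂ)
    (hPh : ∀ n, (P n).IsHermitian) (hPp : ∀ n, P n * P n = P n)
    (hPsum : ∑ n, P n = 1) :
    vnEntropy ρ ≤ vnEntropy (∑ n, P n * ρ * P n) := by
  have hPP : ∀ n, P n * (P n)ᴴ = P n := fun n ↦ by rw [(hPh n).eq, hPp n]
  have hPP' : ∀ n, (P n)ᴴ * P n = P n := fun n ↦ by rw [(hPh n).eq, hPp n]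
  have h := vnEntropy_le_vnEntropy_sum_mul_mul_conjTranspose hρ (K := P)
    (by simp only [hPP, hPsum]) (by simp only [hPP', hPsum])
  simpa only [(hPh _).eq] using h

/-- Lüders measurements increase entropy: if `(P n)` is a finite family of mutually
orthogonal projections summing to the identity and `σ = Σ_n P_n ρ P_n`, then
`S(ρ) ≤ S(σ)`. -/
theorem luders_entropy_increase {d : ℕ} {N : Type*} [Fintype N]
    (ρ : Matrix (Fin d) (Fin d) ℂ)
    (hρ : ρ.PosSemidef) (hρ1 : ρ.trace = 1)
    (P : N → Matrix (Fin d) (Fin d) ℂ)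
    (hPh : ∀ n, (P n).IsHermitian) (hPp : ∀ n, P n * P n = P n)
    (hPo : ∀ n n', n ≠ n' → P n * P n' = 0) (hPsum : ∑ n, P n = 1) :
    vnEntropy ρ ≤ vnEntropy (∑ n, P n * ρ * P n) :=
  luders_entropy_increase_general ρ hρ P hPh hPp hPsum
end

section
/- Counter-example to the converse of the minimality criterion: for ρ = |φ⟩⟨φ| with φ = (1/2)(|↑↓⟩ + √3|↓↑⟩) in ℂ²⊗ℂ² and σ = ρ₁ ⊗ ρ₂ the tensor product of the partial traces of ρ, one has S(ρ‖σ) = S(σ) - S(ρ), but the pair (ρ, σ) is not minimal: there exists a spectral eigenprojection Q of σ with Tr(σ Q) ≠ Tr(ρ Q). -/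
open Matrix
open scoped ComplexOrder

/-- The spectral eigenprojection of a Hermitian matrix `A` for the eigenvalue `c`. -/
noncomputable def eigProj {n : Type*} [Fintype n] [DecidableEq n]
    (A : Matrix n n ℂ) (c : ℝ) : Matrix n n ℂ := by
  classical
  exact
    if hA : A.IsHermitian then
      (hA.eigenvectorUnitary : Matrix n n ℂ) *
        Matrix.diagonal (fun i => if hA.eigenvalues i = c then (1 : ℂ) else 0) *
        (star (hA.eigenvectorUnitary : Matrix n n ℂ))
    else 0

/-- The projector `ρ = |φ⟩⟨φ|` onto `φ = (1/2)(|↑↓⟩ + √3 |↓↑⟩)`, written in the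
standard basis of `ℂ² ⊗ ℂ² ≅ ℂ⁴`. -/
noncomputable def ρcex : Matrix (Fin 4) (Fin 4) ℂ :=
  !![0, 0, 0, 0;
     0, 1/4, (Real.sqrt 3 : ℂ)/4, 0;
     0, (Real.sqrt 3 : ℂ)/4, 3/4, 0;
     0, 0, 0, 0]

/-- The product of the partial traces `σ = ρ₁ ⊗ ρ₂`, diagonal in the standard basis. -/
noncomputable def σcex : Matrix (Fin 4) (Fin 4) ℂ :=
  Matrix.diagonal ![3/16, 1/16, 9/16, 3/16]

/-! `ρ` is a projection, so `log ρ = 0`. The diagonal matrix `σ` has entries `pₐ q_b` with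
`p = (1/4, 3/4)` and `q = (3/4, 1/4)` the marginals of `ρ`, so `log σ = log ρ₁ ⊗ 1 + 1 ⊗ log ρ₂` and,
since `ρ` and `σ` have the same marginals, `Tr(ρ log σ) = Tr(σ log σ)`; this is the entropy
identity. Yet the eigenprojection of `σ` for the eigenvalue `1/16` projects onto `e₁ ⊗ e₂`, which
carries weight `1/16` under `σ` but `1/4` under `ρ`. -/

namespace Matrix

variable {n : Type*} [Fintype n] [DecidableEq n]

theorem diagonal_comp_mul_eq_mul_diagonal_comp {ι R : Type*} [CommRing R] [NoZeroDivisors R]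
    {φ : ι → R} (hφ : Function.Injective φ) {a b : n → ι} {U : Matrix n n R}
    (hU : diagonal (φ ∘ a) * U = U * diagonal (φ ∘ b)) (g : ι → R) :
    diagonal (g ∘ a) * U = U * diagonal (g ∘ b) := by
  ext i j
  have hij : φ (a i) * U i j = U i j * φ (b j) := by
    simpa only [diagonal_mul, mul_diagonal, Function.comp_apply] using congr($hU i j)
  simp only [diagonal_mul, mul_diagonal, Function.comp_apply]
  rcases eq_or_ne (U i j) 0 with h | h
  · simp [h]
  · rw [hφ (mul_left_cancel₀ h ((mul_comm _ _).trans hij)), mul_comm]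

theorem trace_mul_diagonal {α : Type*} [NonUnitalNonAssocSemiring α] (A : Matrix n n α)
    (v : n → α) : (A * diagonal v).trace = ∑ i, A i i * v i := by
  simp [trace, mul_diagonal]

theorem IsHermitian.mul_eigenvectorUnitary {𝕜 : Type*} [RCLike 𝕜] {A : Matrix n n 𝕜}
    (hA : A.IsHermitian) :
    A * (hA.eigenvectorUnitary : Matrix n n 𝕜) =
      (hA.eigenvectorUnitary : Matrix n n 𝕜) * diagonal (RCLike.ofReal ∘ hA.eigenvalues) := by
  rw [← hA.conjStarAlgAut_star_eigenvectorUnitary, Unitary.conjStarAlgAut_star_apply]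
  simp [← mul_assoc]

theorem cfc_diagonal_ofReal {𝕜 : Type*} [RCLike 𝕜] (f : ℝ → ℝ) (d : n → ℝ) :
    cfc f (diagonal (RCLike.ofReal ∘ d) : Matrix n n 𝕜) = diagonal (RCLike.ofReal ∘ f ∘ d) := by
  have hA : (diagonal (RCLike.ofReal ∘ d) : Matrix n n 𝕜).IsHermitian :=
    isHermitian_diagonal_of_self_adjoint _ (by ext; simp)
  have hU := diagonal_comp_mul_eq_mul_diagonal_comp RCLike.ofReal_injective
    hA.mul_eigenvectorUnitary (RCLike.ofReal ∘ f)
  rw [hA.cfc_eq, IsHermitian.cfc, Unitary.conjStarAlgAut_apply, ← Function.comp_assoc, ← hU]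
  simp only [mul_assoc, Unitary.mul_star_self_of_mem, SetLike.coe_mem, mul_one]
  rfl

end Matrix

open Matrix

section

variable {n : Type*} [Fintype n] [DecidableEq n]

theorem mlog_eq_cfc (A : Matrix n n ℂ) : mlog A = cfc Real.log A := by
  by_cases hA : A.IsHermitian
  · rw [mlog, dif_pos hA, hA.cfc_eq, IsHermitian.cfc, Unitary.conjStarAlgAut_apply]
    rfl
  · rw [mlog, dif_neg hA]
    exact (cfc_apply_of_not_predicate A hA).symm

theorem eigProj_eq_cfc (A : Matrix n n ℂ) (c : ℝ) :
    eigProj A c = cfc (fun x => if x = c then 1 else 0) A := by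
  by_cases hA : A.IsHermitian
  · rw [eigProj, dif_pos hA, hA.cfc_eq, IsHermitian.cfc, Unitary.conjStarAlgAut_apply]
    simp only [Function.comp_def, apply_ite RCLike.ofReal, RCLike.ofReal_one, RCLike.ofReal_zero]
  · rw [eigProj, dif_neg hA]
    exact (cfc_apply_of_not_predicate A hA).symm

theorem mlog_eq_zero_of_isIdempotentElem {A : Matrix n n ℂ} (hP : IsIdempotentElem A) :
    mlog A = 0 := by
  have hspec : spectrum ℝ A ⊆ {0, 1} := hP.spectrum_subset ℝ
  rw [mlog_eq_cfc, cfc_congr (g := 0) fun x hx => ?_, cfc_zero]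
  rcases hspec hx with rfl | rfl <;> simp

end

theorem σcex_eq_diagonal : σcex = diagonal (RCLike.ofReal ∘ ![3/16, 1/16, 9/16, 3/16]) := by
  unfold σcex
  congr 1
  ext i
  fin_cases i <;> norm_num

theorem isIdempotentElem_ρcex : IsIdempotentElem ρcex := by
  have hsqrt : (Real.sqrt 3 : ℂ) * (Real.sqrt 3 : ℂ) = 3 := by
    rw [← Complex.ofReal_mul, Real.mul_self_sqrt (by norm_num)]
    norm_num
  unfold IsIdempotentElem ρcex
  ext i j
  fin_cases i <;> fin_cases j <;>
    simp [Matrix.mul_apply, Fin.sum_univ_four] <;>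
    first
      | linear_combination hsqrt / 16
      | ring

theorem mlog_σcex :
    mlog σcex = diagonal (RCLike.ofReal ∘ Real.log ∘ ![3/16, 1/16, 9/16, 3/16]) := by
  rw [mlog_eq_cfc, σcex_eq_diagonal, cfc_diagonal_ofReal]

theorem eigProj_σcex (c : ℝ) :
    eigProj σcex c =
      diagonal (RCLike.ofReal ∘ (fun x => if x = c then 1 else 0) ∘ ![3/16, 1/16, 9/16, 3/16]) := by
  rw [eigProj_eq_cfc, σcex_eq_diagonal, cfc_diagonal_ofReal]

theorem trace_ρcex_mul_mlog_σcex : (ρcex * mlog σcex).trace = (σcex * mlog σcex).trace := by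
  -- `σ₁₁ σ₂₂ = σ₀₀ σ₃₃` because `σ = ρ₁ ⊗ ρ₂`
  have hlog : (Real.log (9/16) : ℂ) + Real.log (1/16) = 2 * Real.log (3/16) := by
    rw [← Complex.ofReal_add, ← Real.log_mul (by norm_num) (by norm_num),
      show (9/16 : ℝ) * (1/16) = (3/16) ^ 2 by norm_num, Real.log_pow]
    push_cast
    ring
  rw [mlog_σcex, σcex_eq_diagonal, trace_mul_diagonal, trace_mul_diagonal]
  simp [Fin.sum_univ_four, ρcex, -Complex.ofNat_log] at hlog ⊢
  linear_combination (3/16 : ℂ) * hlog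

/-- Counter-example to the converse of the minimality criterion: for this pair one has
`S(ρ‖σ) = S(σ) - S(ρ)`, yet `(ρ, σ)` is not minimal: some spectral eigenprojection `Q`
of `σ` has `Tr(σ Q) ≠ Tr(ρ Q)`. -/
theorem counterexample_not_minimal :
    ((ρcex * mlog ρcex).trace.re - (ρcex * mlog σcex).trace.re =
        vnEntropy σcex - vnEntropy ρcex) ∧
      ∃ c : ℝ, (σcex * eigProj σcex c).trace ≠ (ρcex * eigProj σcex c).trace := by
  have hρ : mlog ρcex = 0 := mlog_eq_zero_of_isIdempotentElem isIdempotentElem_ρcex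
  refine ⟨?_, 1/16, ?_⟩
  · simp only [vnEntropy, hρ, trace_ρcex_mul_mlog_σcex, mul_zero, trace_zero, Complex.zero_re]
    ring
  · rw [eigProj_σcex, σcex_eq_diagonal, trace_mul_diagonal, trace_mul_diagonal]
    simp [Fin.sum_univ_four, ρcex]
    norm_num
end
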